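/- arXiv:nlin/0611053 — 3 statements merged into one kernel-verified Lean document; each statement's English description precedes it below -/
import Mathlib

section
/- Let R be an associative unital ring, σ : R → R an anti-automorphism, and let ∂, L ∈ R be units and M ∈ R an element satisfying σ(L) = −∂L∂⁻¹ and σ(M) = σ(L)⁻¹·∂·M·∂⁻¹·σ(L). Then for every natural number m ≥ 0 and every integer l, one has ∂⁻¹·σ(MᵐLˡ)·∂ = (−1)ˡ·L^{l−1}·Mᵐ·L. Consequently the elements A_{ml}(L,M) = MᵐLˡ − (−1)ˡ L^{l−1}MᵐL satisfy ∂⁻¹·σ(A_{ml}(L,M))·∂ = −A_{ml}(L,M), i.e. they are the generators of the additional symmetries of the BKP hierarchy compatible with the B-type constraint. -/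
/-!
Conjugating by `∂` turns `σ` into the anti-endomorphism `τ x = ∂⁻¹ σ(x) ∂` (it fixes `1` because
`σ(L)` is a unit), and the hypotheses become `τ L = -L`, `τ M = L⁻¹ M L`. Anti-multiplicativity
then gives `τ(MᵐLˡ) = (-1)ˡ Lˡ L⁻¹ Mᵐ L` at once. Moreover `τ ∘ τ` is a ring endomorphism fixing
`L` and `M`, so `X = MᵐLˡ` satisfies `τ(τ X) = X`, and `A = X - τ X` is sent to `τ X - X = -A`.
-/

open MulOpposite

section

variable {R : Type*} [Ring R]

theorem map_one_of_isUnit_map {σ : R → R} (hmul : ∀ x y : R, σ (x * y) = σ y * σ x) {x : R}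
    (hx : IsUnit (σ x)) : σ 1 = 1 :=
  hx.mul_eq_left.mp (by rw [← hmul, one_mul])

def conjAntiHom (σ : R → R) (hadd : ∀ x y : R, σ (x + y) = σ x + σ y)
    (hmul : ∀ x y : R, σ (x * y) = σ y * σ x) (h1 : σ 1 = 1) (d : Rˣ) : R →+* Rᵐᵒᵖ where
  toFun x := op (((d⁻¹ : Rˣ) : R) * σ x * d)
  map_one' := by simp [h1]
  map_mul' x y := by simp only [hmul, ← op_mul, mul_assoc, Units.mul_inv_cancel_left]
  map_zero' := by
    have h0 : σ 0 = 0 := by simpa using hadd 0 0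
    simp [h0]
  map_add' x y := by simp [hadd, mul_add, add_mul]

theorem conjAntiHom_apply (σ : R → R) (hadd : ∀ x y : R, σ (x + y) = σ x + σ y)
    (hmul : ∀ x y : R, σ (x * y) = σ y * σ x) (h1 : σ 1 = 1) (d : Rˣ) (x : R) :
    (conjAntiHom σ hadd hmul h1 d x).unop = ↑d⁻¹ * σ x * d :=
  rfl

namespace RingHom

variable (τ : R →+* Rᵐᵒᵖ) {L : Rˣ} {M : R}

theorem unop_map_units_zpow {u v : Rˣ} (h : (τ u).unop = v) (l : ℤ) :
    (τ ↑(u ^ l)).unop = ↑(v ^ l) := by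
  let φ : Rˣ →* Rˣᵐᵒᵖ := Units.opEquiv.toMonoidHom.comp (Units.map τ.toMonoidHom)
  have hφ : φ u = MulOpposite.op v := unop_injective (Units.ext h)
  change ((φ (u ^ l)).unop : R) = _
  rw [map_zpow, hφ, ← op_zpow]
  rfl

theorem unop_map_units_zpow_of_neg {u : Rˣ} (h : (τ u).unop = -u) (l : ℤ) :
    (τ ↑(u ^ l)).unop = ↑((-1 : Rˣ) ^ l * u ^ l) := by
  rw [τ.unop_map_units_zpow (v := -u) (by simpa using h), neg_eq_neg_one_mul,
    (Commute.neg_one_left u).mul_zpow]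

theorem unop_map_pow_of_conj (hM : (τ M).unop = ↑L⁻¹ * M * L) (m : ℕ) :
    (τ (M ^ m)).unop = ↑L⁻¹ * M ^ m * L := by
  rw [map_pow, unop_pow, hM, Units.conj_pow']

theorem unop_map_pow_mul_zpow (hL : (τ L).unop = -L) (hM : (τ M).unop = ↑L⁻¹ * M * L)
    (m : ℕ) (l : ℤ) :
    (τ (M ^ m * ↑(L ^ l))).unop = ↑((-1 : Rˣ) ^ l) * (↑(L ^ (l - 1)) * M ^ m * L) := by
  rw [map_mul, unop_mul, τ.unop_map_units_zpow_of_neg hL, τ.unop_map_pow_of_conj hM,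
    zpow_sub_one]
  simp only [Units.val_mul, mul_assoc]

def antiSquare : R →+* R := (RingEquiv.opOp R).symm.toRingHom.comp (τ.op.comp τ)

theorem antiSquare_apply (x : R) : τ.antiSquare x = (τ (τ x).unop).unop :=
  rfl

theorem antiSquare_units_zpow {u : Rˣ} (h : (τ u).unop = -u) (l : ℤ) :
    τ.antiSquare ↑(u ^ l) = ↑(u ^ l) := by
  have hu : Units.map τ.antiSquare.toMonoidHom u = u :=
    Units.ext <| by simp [antiSquare_apply, h]
  exact congrArg Units.val (show Units.map τ.antiSquare.toMonoidHom (u ^ l) = u ^ l by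
    rw [map_zpow, hu])

theorem antiSquare_of_conj (hL : (τ L).unop = -L) (hM : (τ M).unop = ↑L⁻¹ * M * L) :
    τ.antiSquare M = M := by
  have hLinv : (τ ↑L⁻¹).unop = -↑L⁻¹ := by
    simpa using τ.unop_map_units_zpow_of_neg hL (-1)
  simp [antiSquare_apply, hM, hL, hLinv, mul_assoc]

theorem antiSquare_pow_mul_zpow (hL : (τ L).unop = -L) (hM : (τ M).unop = ↑L⁻¹ * M * L)
    (m : ℕ) (l : ℤ) : τ.antiSquare (M ^ m * ↑(L ^ l)) = M ^ m * ↑(L ^ l) := by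
  rw [map_mul, map_pow, τ.antiSquare_of_conj hL hM, τ.antiSquare_units_zpow hL]

theorem unop_map_sub_unop_map {x : R} (hx : τ.antiSquare x = x) :
    (τ (x - (τ x).unop)).unop = -(x - (τ x).unop) := by
  rw [map_sub, unop_sub, ← antiSquare_apply, hx, neg_sub]

end RingHom

end

theorem bkp_additional_symmetry_generators_general
    {R : Type*} [Ring R] (σ : R → R)
    (hadd : ∀ x y : R, σ (x + y) = σ x + σ y)
    (hmul : ∀ x y : R, σ (x * y) = σ y * σ x)
    (d L : Rˣ) (M : R)
    (hL : σ (L : R) = -((d : R) * (L : R) * ((d⁻¹ : Rˣ) : R)))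
    (hM : σ M = Ring.inverse (σ (L : R)) * (d : R) * M * ((d⁻¹ : Rˣ) : R) * σ (L : R)) :
    ∀ (m : ℕ) (l : ℤ),
      ((d⁻¹ : Rˣ) : R) * σ (M ^ m * ((L ^ l : Rˣ) : R)) * (d : R) =
          (((-1 : Rˣ) ^ l : Rˣ) : R) * (((L ^ (l - 1) : Rˣ) : R) * M ^ m * (L : R)) ∧
      ((d⁻¹ : Rˣ) : R) *
            σ (M ^ m * ((L ^ l : Rˣ) : R) -
              (((-1 : Rˣ) ^ l : Rˣ) : R) * (((L ^ (l - 1) : Rˣ) : R) * M ^ m * (L : R))) *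
            (d : R) =
        -(M ^ m * ((L ^ l : Rˣ) : R) -
            (((-1 : Rˣ) ^ l : Rˣ) : R) * (((L ^ (l - 1) : Rˣ) : R) * M ^ m * (L : R))) := by
  intro m l
  have hσL : σ L = ↑(-(d * L * d⁻¹)) := by simp [hL]
  have h1 : σ 1 = 1 := map_one_of_isUnit_map hmul (hσL ▸ Units.isUnit _)
  set τ := conjAntiHom σ hadd hmul h1 d
  have hτL : (τ L).unop = -L := by rw [conjAntiHom_apply, hσL]; simp [mul_assoc]
  have hτM : (τ M).unop = ↑L⁻¹ * M * L := by
    rw [conjAntiHom_apply, hM, hσL, Ring.inverse_unit]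
    simp [mul_assoc]
  have key := τ.unop_map_pow_mul_zpow hτL hτM m l
  refine ⟨key, ?_⟩
  rw [← key]
  exact τ.unop_map_sub_unop_map (τ.antiSquare_pow_mul_zpow hτL hτM m l)

/-- Let `R` be an associative unital ring, `σ` an anti-automorphism,
`d` (playing the role of `∂`) and `L` units of `R` and `M ∈ R` with
`σ(L) = −∂L∂⁻¹` and `σ(M) = σ(L)⁻¹·∂·M·∂⁻¹·σ(L)`.  Then for every `m : ℕ` and `l : ℤ`,
`∂⁻¹·σ(MᵐLˡ)·∂ = (−1)ˡ·L^(l−1)·Mᵐ·L`, and consequently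
`A_{ml} = MᵐLˡ − (−1)ˡ L^(l−1)MᵐL` satisfies `∂⁻¹·σ(A_{ml})·∂ = −A_{ml}`. -/
theorem bkp_additional_symmetry_generators
    {R : Type*} [Ring R] (σ : R → R)
    (hadd : ∀ x y : R, σ (x + y) = σ x + σ y)
    (hmul : ∀ x y : R, σ (x * y) = σ y * σ x)
    (hbij : Function.Bijective σ)
    (d L : Rˣ) (M : R)
    (hL : σ (L : R) = -((d : R) * (L : R) * ((d⁻¹ : Rˣ) : R)))
    (hM : σ M = Ring.inverse (σ (L : R)) * (d : R) * M * ((d⁻¹ : Rˣ) : R) * σ (L : R)) :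
    ∀ (m : ℕ) (l : ℤ),
      ((d⁻¹ : Rˣ) : R) * σ (M ^ m * ((L ^ l : Rˣ) : R)) * (d : R) =
          (((-1 : Rˣ) ^ l : Rˣ) : R) * (((L ^ (l - 1) : Rˣ) : R) * M ^ m * (L : R)) ∧
      ((d⁻¹ : Rˣ) : R) *
            σ (M ^ m * ((L ^ l : Rˣ) : R) -
              (((-1 : Rˣ) ^ l : Rˣ) : R) * (((L ^ (l - 1) : Rˣ) : R) * M ^ m * (L : R))) *
            (d : R) =
        -(M ^ m * ((L ^ l : Rˣ) : R) -
            (((-1 : Rˣ) ^ l : Rˣ) : R) * (((L ^ (l - 1) : Rˣ) : R) * M ^ m * (L : R))) :=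
  bkp_additional_symmetry_generators_general σ hadd hmul d L M hL hM
end

section
/- Let τ, δτ : ℂ^ℕ → ℂ be functions such that for every t ∈ ℂ^ℕ the map s ↦ τ(t + 2[s]) from ℂ to ℂ is complex differentiable at s = 0 with derivative 2·δτ(t). Suppose that for every t ∈ ℂ^ℕ and all pairwise distinct nonzero s₁, s₂, s₃ ∈ ℂ: τ(t+2[s₁]+2[s₂]+2[s₃])·τ(t) = Σ_{(s₁,s₂,s₃)} [(s₁+s₂)(s₁+s₃)] / [(s₁−s₂)(s₁−s₃)] · τ(t+2[s₂]+2[s₃])·τ(t+2[s₁]), where the sum is over cyclic permutations of (s₁,s₂,s₃). Then the differential Fay identity of the BKP hierarchy holds: for every t ∈ ℂ^ℕ and all nonzero s₁ ≠ s₂, (1/s₂² − 1/s₁²)·{τ(t+2[s₁])τ(t+2[s₂]) − τ(t+2[s₁]+2[s₂])τ(t)} = (1/s₂ + 1/s₁)·{δτ(t+2[s₂])τ(t+2[s₁]) − δτ(t+2[s₁])τ(t+2[s₂])} + (1/s₂ − 1/s₁)·{τ(t+2[s₁]+2[s₂])δτ(t) − δτ(t+2[s₁]+2[s₂])τ(t)}.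 -/
/-- `bkpShift s` is the sequence `[s]` with `k`-th entry `s^(2k+1)/(2k+1)`,
`k`-th entry corresponding to the BKP time `t_{2k+1}`. -/
noncomputable def bkpShift (s : ℂ) : ℕ → ℂ :=
  fun k => s ^ (2 * k + 1) / (2 * (k : ℂ) + 1)

/-!
Put `s₃ = s` in the Fay quadrisecant identity and clear its denominators. The resulting
function of `s` vanishes for `s ≠ 0` near `0` by the identity, and at `s = 0` because `[0] = 0`.
Hence its derivative at `0` vanishes; computing this derivative with `∂τ = δτ` gives
`2 s₁² s₂²` times the difference of the two sides of the differential Fay identity.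
-/

open Filter Topology

def BKPFayIdentity (τ : (ℕ → ℂ) → ℂ) : Prop :=
  ∀ (t : ℕ → ℂ) (s1 s2 s3 : ℂ),
    s1 ≠ 0 → s2 ≠ 0 → s3 ≠ 0 → s1 ≠ s2 → s1 ≠ s3 → s2 ≠ s3 →
    τ (t + 2 • bkpShift s1 + 2 • bkpShift s2 + 2 • bkpShift s3) * τ t =
      ((s1 + s2) * (s1 + s3)) / ((s1 - s2) * (s1 - s3)) *
          (τ (t + 2 • bkpShift s2 + 2 • bkpShift s3) * τ (t + 2 • bkpShift s1)) +
        ((s2 + s3) * (s2 + s1)) / ((s2 - s3) * (s2 - s1)) *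
          (τ (t + 2 • bkpShift s3 + 2 • bkpShift s1) * τ (t + 2 • bkpShift s2)) +
        ((s3 + s1) * (s3 + s2)) / ((s3 - s1) * (s3 - s2)) *
          (τ (t + 2 • bkpShift s1 + 2 • bkpShift s2) * τ (t + 2 • bkpShift s3))

@[simp]
lemma bkpShift_zero : bkpShift 0 = 0 := by
  funext k
  simp [bkpShift]

/-- `(s₁ - s₂)(s₁ - s₃)(s₂ - s₃)` times (left side minus right side) of the Fay identity, with
every `s₃`-dependent argument written as `u + 2 • bkpShift s3`. -/
noncomputable def fayDefect (τ : (ℕ → ℂ) → ℂ) (t : ℕ → ℂ) (s1 s2 s3 : ℂ) : ℂ :=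
  (s1 - s2) * (s1 - s3) * (s2 - s3) *
      (τ (t + 2 • bkpShift s1 + 2 • bkpShift s2 + 2 • bkpShift s3) * τ t) -
    (s1 + s2) * (s1 + s3) * (s2 - s3) *
      (τ (t + 2 • bkpShift s2 + 2 • bkpShift s3) * τ (t + 2 • bkpShift s1)) +
    (s2 + s3) * (s2 + s1) * (s1 - s3) *
      (τ (t + 2 • bkpShift s1 + 2 • bkpShift s3) * τ (t + 2 • bkpShift s2)) -
    (s3 + s1) * (s3 + s2) * (s1 - s2) *
      (τ (t + 2 • bkpShift s3) * τ (t + 2 • bkpShift s1 + 2 • bkpShift s2))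

section

variable {τ : (ℕ → ℂ) → ℂ} {s1 s2 : ℂ}

lemma fayDefect_zero_right (t : ℕ → ℂ) : fayDefect τ t s1 s2 0 = 0 := by
  simp only [fayDefect, bkpShift_zero, smul_zero, add_zero]
  ring

lemma fayDefect_eq_zero (hFay : BKPFayIdentity τ) (t : ℕ → ℂ) {s3 : ℂ}
    (h1 : s1 ≠ 0) (h2 : s2 ≠ 0) (h3 : s3 ≠ 0) (h12 : s1 ≠ s2) (h13 : s1 ≠ s3)
    (h23 : s2 ≠ s3) : fayDefect τ t s1 s2 s3 = 0 := by
  have hf := hFay t s1 s2 s3 h1 h2 h3 h12 h13 h23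
  rw [add_right_comm t (2 • bkpShift s3)] at hf
  have d12 := sub_ne_zero.mpr h12
  have d13 := sub_ne_zero.mpr h13
  have d23 := sub_ne_zero.mpr h23
  unfold fayDefect
  linear_combination (norm := skip) (s1 - s2) * (s1 - s3) * (s2 - s3) * hf
  field_simp
  ring

lemma eventually_fayDefect_eq_zero (hFay : BKPFayIdentity τ) (t : ℕ → ℂ)
    (h1 : s1 ≠ 0) (h2 : s2 ≠ 0) (h12 : s1 ≠ s2) :
    ∀ᶠ s in 𝓝 0, fayDefect τ t s1 s2 s = 0 := by
  filter_upwards [eventually_ne_nhds h1.symm, eventually_ne_nhds h2.symm] with s hs1 hs2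
  rcases eq_or_ne s 0 with rfl | hs
  · exact fayDefect_zero_right t
  · exact fayDefect_eq_zero hFay t h1 h2 hs h12 hs1.symm hs2.symm

lemma hasDerivAt_fayDefect {δτ : (ℕ → ℂ) → ℂ}
    (hderiv : ∀ u : ℕ → ℂ, HasDerivAt (fun s : ℂ => τ (u + 2 • bkpShift s)) (2 * δτ u) 0)
    (t : ℕ → ℂ) (s1 s2 : ℂ) :
    HasDerivAt (fayDefect τ t s1 s2)
      (2 * ((s1 ^ 2 - s2 ^ 2) *
          (τ (t + 2 • bkpShift s1) * τ (t + 2 • bkpShift s2) -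
            τ (t + 2 • bkpShift s1 + 2 • bkpShift s2) * τ t) +
        s1 * s2 * ((s1 - s2) *
            (δτ (t + 2 • bkpShift s1 + 2 • bkpShift s2) * τ t -
              τ (t + 2 • bkpShift s1 + 2 • bkpShift s2) * δτ t) -
          (s1 + s2) *
            (δτ (t + 2 • bkpShift s2) * τ (t + 2 • bkpShift s1) -
              δτ (t + 2 • bkpShift s1) * τ (t + 2 • bkpShift s2))))) 0 := by
  have hs : HasDerivAt (fun s : ℂ => s) 1 0 := hasDerivAt_id 0
  have h1 := (((hs.const_sub s1).const_mul (s1 - s2)).mul (hs.const_sub s2)).mul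
    ((hderiv (t + 2 • bkpShift s1 + 2 • bkpShift s2)).mul_const (τ t))
  have h2 := (((hs.const_add s1).const_mul (s1 + s2)).mul (hs.const_sub s2)).mul
    ((hderiv (t + 2 • bkpShift s2)).mul_const (τ (t + 2 • bkpShift s1)))
  have h3 := (((hs.const_add s2).mul_const (s2 + s1)).mul (hs.const_sub s1)).mul
    ((hderiv (t + 2 • bkpShift s1)).mul_const (τ (t + 2 • bkpShift s2)))
  have h4 := (((hs.add_const s1).mul (hs.add_const s2)).mul_const (s1 - s2)).mul
    ((hderiv t).mul_const (τ (t + 2 • bkpShift s1 + 2 • bkpShift s2)))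
  refine (((h1.sub h2).add h3).sub h4).congr_deriv ?_
  simp only [bkpShift_zero, smul_zero, add_zero, Pi.mul_apply]
  ring

end

/-- Let `τ, δτ : ℂ^ℕ → ℂ` be such that for every `t` the map
`s ↦ τ(t + 2[s])` is complex differentiable at `0` with derivative `2·δτ(t)`, and
suppose `τ` satisfies the `s₀ = 0` form of the BKP Fay quadrisecant identity.
Then the differential Fay identity of the BKP hierarchy holds. -/
theorem bkp_differential_fay
    (τ δτ : (ℕ → ℂ) → ℂ)
    (hderiv : ∀ t : ℕ → ℂ,
      HasDerivAt (fun s : ℂ => τ (t + 2 • bkpShift s)) (2 * δτ t) 0)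
    (hFay : ∀ (t : ℕ → ℂ) (s1 s2 s3 : ℂ),
      s1 ≠ 0 → s2 ≠ 0 → s3 ≠ 0 → s1 ≠ s2 → s1 ≠ s3 → s2 ≠ s3 →
      τ (t + 2 • bkpShift s1 + 2 • bkpShift s2 + 2 • bkpShift s3) * τ t =
        ((s1 + s2) * (s1 + s3)) / ((s1 - s2) * (s1 - s3)) *
            (τ (t + 2 • bkpShift s2 + 2 • bkpShift s3) * τ (t + 2 • bkpShift s1)) +
          ((s2 + s3) * (s2 + s1)) / ((s2 - s3) * (s2 - s1)) *
            (τ (t + 2 • bkpShift s3 + 2 • bkpShift s1) * τ (t + 2 • bkpShift s2)) +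
          ((s3 + s1) * (s3 + s2)) / ((s3 - s1) * (s3 - s2)) *
            (τ (t + 2 • bkpShift s1 + 2 • bkpShift s2) * τ (t + 2 • bkpShift s3))) :
    ∀ (t : ℕ → ℂ) (s1 s2 : ℂ), s1 ≠ 0 → s2 ≠ 0 → s1 ≠ s2 →
      (1 / s2 ^ 2 - 1 / s1 ^ 2) *
          (τ (t + 2 • bkpShift s1) * τ (t + 2 • bkpShift s2) -
            τ (t + 2 • bkpShift s1 + 2 • bkpShift s2) * τ t) =
        (1 / s2 + 1 / s1) *
            (δτ (t + 2 • bkpShift s2) * τ (t + 2 • bkpShift s1) -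
              δτ (t + 2 • bkpShift s1) * τ (t + 2 • bkpShift s2)) +
          (1 / s2 - 1 / s1) *
            (τ (t + 2 • bkpShift s1 + 2 • bkpShift s2) * δτ t -
              δτ (t + 2 • bkpShift s1 + 2 • bkpShift s2) * τ t) := by
  intro t s1 s2 h1 h2 h12
  have hD := (hasDerivAt_fayDefect hderiv t s1 s2).unique
    ((hasDerivAt_const (0 : ℂ) (0 : ℂ)).congr_of_eventuallyEq
      (eventually_fayDefect_eq_zero hFay t h1 h2 h12))
  linear_combination (norm := skip) hD / (2 * s1 ^ 2 * s2 ^ 2)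
  field_simp
  ring
end

section
/- Let τ : ℂ^ℕ → ℂ satisfy, for every t ∈ ℂ^ℕ and all pairwise distinct nonzero s₁, s₂, s₃ ∈ ℂ: τ(t+2[s₁]+2[s₂]+2[s₃])·τ(t) = Σ_{(s₁,s₂,s₃)} [(s₁+s₂)(s₁+s₃)] / [(s₁−s₂)(s₁−s₃)] · τ(t+2[s₂]+2[s₃])·τ(t+2[s₁]), where the sum is over cyclic permutations of (s₁,s₂,s₃). Then for every t ∈ ℂ^ℕ and all nonzero λ, μ, z ∈ ℂ with z ≠ ±λ, z ≠ ±μ and λ + μ ≠ 0: [(z+λ)(z−μ)] / [(z−λ)(z+μ)] · τ(t)·τ(t+2[λ⁻¹]−2[z⁻¹]−2[μ⁻¹]) − τ(t−2[z⁻¹])·τ(t+2[λ⁻¹]−2[μ⁻¹]) = [(λ−μ)/(λ+μ)] · { [(z+λ)/(z−λ)]·τ(t−2[μ⁻¹])·τ(t+2[λ⁻¹]−2[z⁻¹]) − [(z−μ)/(z+μ)]·τ(t−2[z⁻¹]−2[μ⁻¹])·τ(t+2[λ⁻¹]) }. (This is the key tau-function identity, obtained from the Fay identity with s₁ = −z⁻¹,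 s₂ = λ⁻¹, s₃ = −μ⁻¹, used to rewrite the action of the vertex operator X_B(λ,μ) on the wave function in the proof of the Adler–Shiota–van Moerbeke formula for the BKP hierarchy.) -/
/-!
Apply the Fay identity at `s₁ = λ⁻¹`, `s₂ = -z⁻¹`, `s₃ = -μ⁻¹`. Since `[s]` is odd in `s`, the
shifts by `2[-z⁻¹]`, `2[-μ⁻¹]` are the shifts by `-2[z⁻¹]`, `-2[μ⁻¹]`, and in the reciprocal
variables the Fay coefficients `(s₁+s₂)(s₁+s₃)/((s₁-s₂)(s₁-s₃))` become
`(x+y)(x+w)/((y-x)(w-x))` for `sᵢ = x⁻¹, y⁻¹, w⁻¹`. With `x, y, w = λ, -z, -μ` the relation, freed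
of denominators, is up to sign the identity multiplied by `(z + λ)(z - μ)(λ + μ)`.
-/

lemma bkpShift_neg (s : ℂ) : bkpShift (-s) = -bkpShift s := by
  funext k
  simp [bkpShift, Odd.neg_pow (odd_two_mul_add_one k), neg_div]

lemma mul_fay_coeff_inv {K : Type*} [Field K] {a b c : K} (ha : a ≠ 0) (hb : b ≠ 0) (hc : c ≠ 0)
    (hab : a ≠ b) (hac : a ≠ c) :
    (a - b) * (b - c) * (a - c) *
        ((a⁻¹ + b⁻¹) * (a⁻¹ + c⁻¹) / ((a⁻¹ - b⁻¹) * (a⁻¹ - c⁻¹))) =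
      (a + b) * (a + c) * (b - c) := by
  have hab' : b - a ≠ 0 := sub_ne_zero.2 hab.symm
  have hac' : c - a ≠ 0 := sub_ne_zero.2 hac.symm
  field_simp
  ring

def SatisfiesBKPFay (τ : (ℕ → ℂ) → ℂ) : Prop :=
  ∀ (t : ℕ → ℂ) (s1 s2 s3 : ℂ),
    s1 ≠ 0 → s2 ≠ 0 → s3 ≠ 0 → s1 ≠ s2 → s1 ≠ s3 → s2 ≠ s3 →
    τ (t + 2 • bkpShift s1 + 2 • bkpShift s2 + 2 • bkpShift s3) * τ t =
      ((s1 + s2) * (s1 + s3)) / ((s1 - s2) * (s1 - s3)) *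
          (τ (t + 2 • bkpShift s2 + 2 • bkpShift s3) * τ (t + 2 • bkpShift s1)) +
        ((s2 + s3) * (s2 + s1)) / ((s2 - s3) * (s2 - s1)) *
          (τ (t + 2 • bkpShift s3 + 2 • bkpShift s1) * τ (t + 2 • bkpShift s2)) +
        ((s3 + s1) * (s3 + s2)) / ((s3 - s1) * (s3 - s2)) *
          (τ (t + 2 • bkpShift s1 + 2 • bkpShift s2) * τ (t + 2 • bkpShift s3))

lemma SatisfiesBKPFay.reciprocal {τ : (ℕ → ℂ) → ℂ} (hFay : SatisfiesBKPFay τ)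
    (t : ℕ → ℂ) {x y w : ℂ} (hx : x ≠ 0) (hy : y ≠ 0) (hw : w ≠ 0)
    (hxy : x ≠ y) (hxw : x ≠ w) (hyw : y ≠ w) :
    (x - y) * (y - w) * (x - w) *
        (τ (t + 2 • bkpShift x⁻¹ + 2 • bkpShift y⁻¹ + 2 • bkpShift w⁻¹) * τ t) =
      (x + y) * (x + w) * (y - w) *
          (τ (t + 2 • bkpShift y⁻¹ + 2 • bkpShift w⁻¹) * τ (t + 2 • bkpShift x⁻¹)) +
        (y + w) * (y + x) * (w - x) *
          (τ (t + 2 • bkpShift w⁻¹ + 2 • bkpShift x⁻¹) * τ (t + 2 • bkpShift y⁻¹)) +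
        (w + x) * (w + y) * (x - y) *
          (τ (t + 2 • bkpShift x⁻¹ + 2 • bkpShift y⁻¹) * τ (t + 2 • bkpShift w⁻¹)) := by
  have fay := hFay t _ _ _ (inv_ne_zero hx) (inv_ne_zero hy) (inv_ne_zero hw)
    (inv_injective.ne hxy) (inv_injective.ne hxw) (inv_injective.ne hyw)
  have c1 := mul_fay_coeff_inv hx hy hw hxy hxw
  have c2 := mul_fay_coeff_inv hy hw hx hyw hxy.symm
  have c3 := mul_fay_coeff_inv hw hx hy hxw.symm hyw.symm
  linear_combination (x - y) * (y - w) * (x - w) * fay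
    + τ (t + 2 • bkpShift y⁻¹ + 2 • bkpShift w⁻¹) * τ (t + 2 • bkpShift x⁻¹) * c1
    + τ (t + 2 • bkpShift w⁻¹ + 2 • bkpShift x⁻¹) * τ (t + 2 • bkpShift y⁻¹) * c2
    + τ (t + 2 • bkpShift x⁻¹ + 2 • bkpShift y⁻¹) * τ (t + 2 • bkpShift w⁻¹) * c3

/-- If `τ : ℂ^ℕ → ℂ` satisfies the `s₀ = 0` form of the BKP Fay
quadrisecant identity, then the key tau-function identity (obtained with
`s₁ = −z⁻¹`, `s₂ = λ⁻¹`, `s₃ = −μ⁻¹`) used to rewrite the vertex-operator action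
on the wave function in the proof of the ASV formula holds. -/
theorem bkp_asv_key_tau_identity
    (τ : (ℕ → ℂ) → ℂ)
    (hFay : ∀ (t : ℕ → ℂ) (s1 s2 s3 : ℂ),
      s1 ≠ 0 → s2 ≠ 0 → s3 ≠ 0 → s1 ≠ s2 → s1 ≠ s3 → s2 ≠ s3 →
      τ (t + 2 • bkpShift s1 + 2 • bkpShift s2 + 2 • bkpShift s3) * τ t =
        ((s1 + s2) * (s1 + s3)) / ((s1 - s2) * (s1 - s3)) *
            (τ (t + 2 • bkpShift s2 + 2 • bkpShift s3) * τ (t + 2 • bkpShift s1)) +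
          ((s2 + s3) * (s2 + s1)) / ((s2 - s3) * (s2 - s1)) *
            (τ (t + 2 • bkpShift s3 + 2 • bkpShift s1) * τ (t + 2 • bkpShift s2)) +
          ((s3 + s1) * (s3 + s2)) / ((s3 - s1) * (s3 - s2)) *
            (τ (t + 2 • bkpShift s1 + 2 • bkpShift s2) * τ (t + 2 • bkpShift s3))) :
    ∀ (t : ℕ → ℂ) (lam mu z : ℂ),
      lam ≠ 0 → mu ≠ 0 → z ≠ 0 → z ≠ lam → z ≠ -lam → z ≠ mu → z ≠ -mu →
      lam + mu ≠ 0 →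
      ((z + lam) * (z - mu)) / ((z - lam) * (z + mu)) *
          (τ t * τ (t + 2 • bkpShift lam⁻¹ - 2 • bkpShift z⁻¹ - 2 • bkpShift mu⁻¹)) -
        τ (t - 2 • bkpShift z⁻¹) * τ (t + 2 • bkpShift lam⁻¹ - 2 • bkpShift mu⁻¹) =
      (lam - mu) / (lam + mu) *
        ((z + lam) / (z - lam) *
            (τ (t - 2 • bkpShift mu⁻¹) * τ (t + 2 • bkpShift lam⁻¹ - 2 • bkpShift z⁻¹)) -
          (z - mu) / (z + mu) *
            (τ (t - 2 • bkpShift z⁻¹ - 2 • bkpShift mu⁻¹) * τ (t + 2 • bkpShift lam⁻¹))) := by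
  intro t lam mu z hlam hmu hz hzl hznl hzm hznm hlm
  have key := SatisfiesBKPFay.reciprocal hFay t hlam (neg_ne_zero.2 hz) (neg_ne_zero.2 hmu)
    (fun h => hznl (by linear_combination h)) (fun h => hlm (by linear_combination h))
    (neg_injective.ne hzm)
  simp only [inv_neg, bkpShift_neg, smul_neg, ← sub_eq_add_neg, sub_add_eq_add_sub] at key
  -- opaque names for the shifts stop `field_simp` from rewriting the `⁻¹` inside them
  set L := 2 • bkpShift lam⁻¹
  set Z := 2 • bkpShift z⁻¹
  set M := 2 • bkpShift mu⁻¹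
  have hz_sub_lam : z - lam ≠ 0 := sub_ne_zero.2 hzl
  have hz_add_lam : z + lam ≠ 0 := fun h => hznl (by linear_combination h)
  have hz_sub_mu : z - mu ≠ 0 := sub_ne_zero.2 hzm
  have hz_add_mu : z + mu ≠ 0 := fun h => hznm (by linear_combination h)
  field_simp
  linear_combination -key
end
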